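/- Let G be a finite group with subgroups A, B such that G = AB and [A, B] ≤ F(G), the Fitting subgroup of G. If A and B are nilpotent, then G is metanilpotent, i.e., G/F(G) is nilpotent. -/

import Mathlib

/-- The Fitting subgroup: the join of all nilpotent normal subgroups. -/
def FittingSubgroup (G : Type*) [Group G] : Subgroup G :=
  ⨆ N : {N : Subgroup G // N.Normal ∧ Group.IsNilpotent N}, (N : Subgroup G)

theorem map_conj_of_normal {G : Type*} [Group G] {N : Subgroup G} (hN : N.Normal) (g : G) :
    N.map (MulAut.conj g).toMonoidHom = N := by
  apply le_antisymm
  · rintro x ⟨n, hn, rfl⟩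
    exact hN.conj_mem n hn g
  · intro n hn
    exact ⟨g⁻¹ * n * g, by simpa using hN.conj_mem n hn g⁻¹, by simp [MulAut.conj]; group⟩

instance FittingSubgroup.normal (G : Type*) [Group G] : (FittingSubgroup G).Normal := by
  constructor
  intro n hn g
  have h : (FittingSubgroup G).map (MulAut.conj g).toMonoidHom = FittingSubgroup G := by
    unfold FittingSubgroup
    rw [Subgroup.map_iSup]
    congr 1
    funext N
    exact map_conj_of_normal N.2.1 g
  rw [← h]
  exact ⟨n, hn, rfl⟩

/-- The Fitting series, bundled with normality:
`F 0 = ⊥` and `F (k+1) / F k = F(G / F k)`. -/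
def FittingSeriesAux (G : Type*) [Group G] : ℕ → {H : Subgroup G // H.Normal}
  | 0 => ⟨⊥, inferInstance⟩
  | (k+1) =>
      letI : (FittingSeriesAux G k : Subgroup G).Normal := (FittingSeriesAux G k).2
      ⟨(FittingSubgroup (G ⧸ (FittingSeriesAux G k : Subgroup G))).comap
          (QuotientGroup.mk' (FittingSeriesAux G k : Subgroup G)),
        (FittingSubgroup.normal _).comap _⟩

/-- The `k`-th term of the Fitting series of `G`. -/
def FittingSeries (G : Type*) [Group G] (k : ℕ) : Subgroup G := FittingSeriesAux G k

/-! Modulo `F(G)` the images of `A` and `B` commute elementwise, so `(a, b) ↦ a b F(G)` is a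
surjective homomorphism from the nilpotent group `A × B` onto `G ⧸ F(G)`. -/

theorem QuotientGroup.commute_mk_of_commutator_le {G : Type*} [Group G] {N A B : Subgroup G}
    [N.Normal] (hN : ⁅A, B⁆ ≤ N) {a b : G} (ha : a ∈ A) (hb : b ∈ B) :
    Commute (a : G ⧸ N) (b : G ⧸ N) := by
  rw [← commutatorElement_eq_one_iff_commute, ← QuotientGroup.mk'_apply,
    ← QuotientGroup.mk'_apply, ← map_commutatorElement, QuotientGroup.mk'_apply,
    QuotientGroup.eq_one_iff]
  exact hN (Subgroup.commutator_mem_commutator ha hb)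

theorem isNilpotent_quotient_of_commutator_le {G : Type*} [Group G] (N : Subgroup G) [N.Normal]
    (A B : Subgroup G) (hG : ∀ g : G, ∃ a ∈ A, ∃ b ∈ B, g = a * b) (hN : ⁅A, B⁆ ≤ N)
    [Group.IsNilpotent A] [Group.IsNilpotent B] : Group.IsNilpotent (G ⧸ N) := by
  let f : A × B →* G ⧸ N :=
    ((QuotientGroup.mk' N).comp A.subtype).noncommCoprod ((QuotientGroup.mk' N).comp B.subtype)
      fun a b => QuotientGroup.commute_mk_of_commutator_le hN a.2 b.2
  refine Group.nilpotent_of_surjective f fun q => ?_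
  obtain ⟨g, rfl⟩ := QuotientGroup.mk_surjective q
  obtain ⟨a, ha, b, hb, rfl⟩ := hG g
  exact ⟨(⟨a, ha⟩, ⟨b, hb⟩), rfl⟩

theorem stmt_19_general {G : Type*} [Group G] (A B : Subgroup G)
    (hG : ∀ g : G, ∃ a ∈ A, ∃ b ∈ B, g = a * b)
    (hcomm : ⁅A, B⁆ ≤ FittingSubgroup G)
    (hA : Group.IsNilpotent A) (hB : Group.IsNilpotent B) :
    Group.IsNilpotent (G ⧸ FittingSubgroup G) :=
  isNilpotent_quotient_of_commutator_le _ A B hG hcomm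

theorem stmt_19 {G : Type*} [Group G] [Finite G] (A B : Subgroup G)
    (hG : ∀ g : G, ∃ a ∈ A, ∃ b ∈ B, g = a * b)
    (hcomm : ⁅A, B⁆ ≤ FittingSubgroup G)
    (hA : Group.IsNilpotent A) (hB : Group.IsNilpotent B) :
    Group.IsNilpotent (G ⧸ FittingSubgroup G) :=
  stmt_19_general A B hG hcomm hA hB
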